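/- Let K be a smooth solution of the oriented associativity equations (AE) on ℝⁿ and let k ≥ 0. Let w_0, …, w_k be smooth matrix-valued functions on ℝⁿ with (w_0)^α_β = δ^α_β, (w_1)^α_β = ∂_β K^α (if k ≥ 1), and ∂_α (w_j)^β_γ = ∂_α∂_ρ K^β (w_{j−1})^ρ_γ for j = 1,…,k, and let v_0, …, v_k be smooth vector-valued functions with v_0^β(x) = x^β, v_1^β = K^β (if k ≥ 1), and ∂_α∂_γ v_j^β = ∂_α∂_γ K^ν ∂_ν v_{j−1}^β for j = 2,…,k. Then for each fixed β and γ, the tuple G^α = Σ_{j=0}^{k} (−1)^j v_j^β (w_{k−j})^α_γ is a symmetry characteristic of (AE) at K, i.e. it satisfies the linearized oriented associativity equations (LAE). -/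

import Mathlib

/-- Partial derivative of `f` in the `i`-th coordinate direction on `ℝⁿ`. -/
noncomputable def pd {n : ℕ} (i : Fin n) (f : (Fin n → ℝ) → ℝ) : (Fin n → ℝ) → ℝ :=
  fun x => fderiv ℝ f x (Pi.single i 1)

lemma contDiff_pd {n : ℕ} (i : Fin n) {f : (Fin n → ℝ) → ℝ} (hf : ContDiff ℝ (⊤ : ℕ∞) f) :
    ContDiff ℝ (⊤ : ℕ∞) (pd i f) :=
  (hf.fderiv_right (by simp)).clm_apply contDiff_const

lemma pd_const {n : ℕ} (i : Fin n) (c : ℝ) : pd i (fun _ => c) = fun _ => (0 : ℝ) := by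
  funext x; simp [pd]

lemma pd_add {n : ℕ} (i : Fin n) {f g : (Fin n → ℝ) → ℝ} {x : Fin n → ℝ}
    (hf : DifferentiableAt ℝ f x) (hg : DifferentiableAt ℝ g x) :
    pd i (fun y => f y + g y) x = pd i f x + pd i g x := by
  simp [pd, fderiv_fun_add hf hg]

lemma pd_mul {n : ℕ} (i : Fin n) {f g : (Fin n → ℝ) → ℝ} {x : Fin n → ℝ}
    (hf : DifferentiableAt ℝ f x) (hg : DifferentiableAt ℝ g x) :
    pd i (fun y => f y * g y) x = pd i f x * g x + f x * pd i g x := by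
  simp [pd, fderiv_fun_mul hf hg]; ring

lemma pd_const_mul {n : ℕ} (i : Fin n) (c : ℝ) {f : (Fin n → ℝ) → ℝ} {x : Fin n → ℝ}
    (hf : DifferentiableAt ℝ f x) :
    pd i (fun y => c * f y) x = c * pd i f x := by
  simp [pd, fderiv_const_mul hf]

lemma pd_sum {n : ℕ} {ι : Type*} (s : Finset ι) (i : Fin n)
    (f : ι → (Fin n → ℝ) → ℝ) {x : Fin n → ℝ}
    (h : ∀ j ∈ s, DifferentiableAt ℝ (f j) x) :
    pd i (fun y => ∑ j ∈ s, f j y) x = ∑ j ∈ s, pd i (f j) x := by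
  simp [pd, fderiv_fun_sum h]

lemma pd_comm {n : ℕ} {f : (Fin n → ℝ) → ℝ} (hf : ContDiff ℝ (⊤ : ℕ∞) f) (i j : Fin n)
    (x : Fin n → ℝ) : pd i (pd j f) x = pd j (pd i f) x := by
  have hs : IsSymmSndFDerivAt ℝ f x :=
    (hf.contDiffAt).isSymmSndFDerivAt (by rw [minSmoothness_of_isRCLikeNormedField]; exact WithTop.coe_le_coe.mpr le_top)
  have hd : DifferentiableAt ℝ (fderiv ℝ f) x :=
    ((hf.fderiv_right (m := 1) (by exact WithTop.coe_le_coe.mpr le_top)).differentiable (by simp)).differentiableAt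
  have key : ∀ u w : Fin n → ℝ,
      fderiv ℝ (fun y => fderiv ℝ f y w) x u = fderiv ℝ (fderiv ℝ f) x u w := by
    intro u w
    rw [fderiv_clm_apply hd (differentiableAt_const w)]
    simp
  show fderiv ℝ (fun y => fderiv ℝ f y (Pi.single j 1)) x (Pi.single i 1) = _
  rw [key, hs (Pi.single i 1) (Pi.single j 1), ← key]
  rfl


lemma sum_shift (f : ℕ → ℝ) (k : ℕ) (hf : ∀ j, k ≤ j + 1 → f j = 0) :
    ∑ i ∈ Finset.range (k + 1), f i
      = ∑ j ∈ Finset.range k, (if j = 0 then 0 else f (j - 1)) := by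
  cases k with
  | zero => simp [hf 0 (by omega)]
  | succ m =>
    rw [Finset.sum_range_succ, Finset.sum_range_succ, hf (m+1) (by omega), hf m (by omega),
      Finset.sum_range_succ']
    simp only [Nat.add_sub_cancel, if_neg (Nat.succ_ne_zero _)]
    cases m with
    | zero => simp
    | succ l =>
      rw [Finset.sum_range_succ (fun j => f j) l]
      simp [hf (l+1) (by omega)]


section Alg
variable {n : ℕ} (A : Fin n → Fin n → Fin n → ℝ) (W d : Fin n → ℝ)

lemma sum_mul_comm1 (f : Fin n → Fin n → ℝ) (g : Fin n → ℝ) :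
    (∑ ρ, (∑ μ, f ρ μ) * g ρ) = ∑ μ, ∑ ρ, f ρ μ * g ρ := by
  simp only [Finset.sum_mul]; exact Finset.sum_comm

lemma mul_sum_comm1 (f : Fin n → Fin n → ℝ) (g : Fin n → ℝ) :
    (∑ ρ, g ρ * (∑ μ, f ρ μ)) = ∑ μ, ∑ ρ, g ρ * f ρ μ := by
  simp only [Finset.mul_sum]; exact Finset.sum_comm

lemma keyA
    (hA : ∀ ν a b, A ν a b = A ν b a)
    (hAE : ∀ ν a b c, ∑ ρ, A ν a ρ * A ρ b c = ∑ ρ, A ρ a b * A ν ρ c)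
    (R : Fin n → Fin n → Fin n → ℝ)
    (hR : ∀ ν a b, R ν a b = -(∑ μ, A μ a b * d μ) * W ν
        + d b * (∑ ρ, A ν a ρ * W ρ) + d a * (∑ ρ, A ν b ρ * W ρ)) :
    ∀ a b c ν, (∑ ρ, R ν a ρ * A ρ b c) + (∑ ρ, A ν a ρ * R ρ b c)
      = (∑ ρ, R ρ a b * A ν ρ c) + (∑ ρ, A ρ a b * R ν ρ c) := by
  intro a b c ν
  -- M symmetry facts
  have hM23 : ∀ ν a b c, (∑ ρ, A ν a ρ * A ρ b c) = ∑ ρ, A ν a ρ * A ρ c b :=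
    fun ν a b c => Finset.sum_congr rfl fun ρ _ => by rw [hA ρ b c]
  have hMc : ∀ ν a b c, (∑ ρ, A ν a ρ * A ρ b c) = ∑ ρ, A ν c ρ * A ρ a b := by
    intro ν a b c
    rw [hAE ν a b c]
    exact Finset.sum_congr rfl fun ρ _ => by rw [hA ν ρ c]; ring
  have hM12 : ∀ ν a b c, (∑ ρ, A ν a ρ * A ρ b c) = ∑ ρ, A ν b ρ * A ρ a c := by
    intro ν a b c
    rw [hMc ν a b c, hMc ν c a b, hM23 ν b c a]
  -- contractions
  have f1 : ∀ p q r, (∑ ρ, (∑ μ, A μ p ρ * d μ) * A ρ q r)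
      = ∑ μ, d μ * (∑ ρ, A μ p ρ * A ρ q r) := by
    intro p q r
    rw [sum_mul_comm1]
    exact Finset.sum_congr rfl fun μ _ => by
      rw [Finset.mul_sum]; exact Finset.sum_congr rfl fun ρ _ => by ring
  have f1' : ∀ p q r, (∑ ρ, A ρ p q * (∑ μ, A μ ρ r * d μ))
      = ∑ μ, d μ * (∑ ρ, A μ p ρ * A ρ q r) := by
    intro p q r
    rw [mul_sum_comm1]
    refine Finset.sum_congr rfl fun μ _ => ?_
    calc (∑ ρ, A ρ p q * (A μ ρ r * d μ))
        = d μ * ∑ ρ, A ρ p q * A μ ρ r := by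
          rw [Finset.mul_sum]; exact Finset.sum_congr rfl fun ρ _ => by ring
      _ = _ := by rw [← hAE μ p q r]
  have f2 : ∀ X q r, (∑ ρ, (∑ σ, A X ρ σ * W σ) * A ρ q r)
      = ∑ σ, W σ * (∑ ρ, A X σ ρ * A ρ q r) := by
    intro X q r
    rw [sum_mul_comm1]
    refine Finset.sum_congr rfl fun σ _ => ?_
    rw [Finset.mul_sum]
    exact Finset.sum_congr rfl fun ρ _ => by rw [hA X ρ σ]; ring
  have f3 : ∀ X p q, (∑ ρ, A X p ρ * (∑ σ, A ρ q σ * W σ))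
      = ∑ σ, W σ * (∑ ρ, A X p ρ * A ρ q σ) := by
    intro X p q
    rw [mul_sum_comm1]
    refine Finset.sum_congr rfl fun σ _ => ?_
    rw [Finset.mul_sum]
    exact Finset.sum_congr rfl fun ρ _ => by ring
  have f4 : ∀ X p r, (∑ ρ, (∑ σ, A ρ p σ * W σ) * A X ρ r)
      = ∑ σ, W σ * (∑ ρ, A X p ρ * A ρ σ r) := by
    intro X p r
    rw [sum_mul_comm1]
    refine Finset.sum_congr rfl fun σ _ => ?_
    calc (∑ ρ, A ρ p σ * W σ * A X ρ r)
        = W σ * ∑ ρ, A ρ p σ * A X ρ r := by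
          rw [Finset.mul_sum]; exact Finset.sum_congr rfl fun ρ _ => by ring
      _ = _ := by rw [← hAE X p σ r]
  have f5 : ∀ X p q, (∑ ρ, A ρ p q * (∑ σ, A X ρ σ * W σ))
      = ∑ σ, W σ * (∑ ρ, A X p ρ * A ρ q σ) := by
    intro X p q
    rw [mul_sum_comm1]
    refine Finset.sum_congr rfl fun σ _ => ?_
    calc (∑ ρ, A ρ p q * (A X ρ σ * W σ))
        = W σ * ∑ ρ, A ρ p q * A X ρ σ := by
          rw [Finset.mul_sum]; exact Finset.sum_congr rfl fun ρ _ => by ring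
      _ = _ := by rw [← hAE X p q σ]
  have hWE : ∀ X r, (∑ ρ, W ρ * A X ρ r) = ∑ ρ, A X r ρ * W ρ :=
    fun X r => Finset.sum_congr rfl fun ρ _ => by rw [hA X ρ r]; ring
  have hdA : ∀ q r, (∑ ρ, d ρ * A ρ q r) = ∑ μ, A μ q r * d μ :=
    fun q r => Finset.sum_congr rfl fun ρ _ => by ring
  -- expansion of the four sums
  have eL1 : (∑ ρ, R ν a ρ * A ρ b c)
      = -(W ν) * (∑ μ, d μ * (∑ ρ, A μ a ρ * A ρ b c))
        + (∑ σ, A ν a σ * W σ) * (∑ μ, A μ b c * d μ)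
        + d a * (∑ σ, W σ * (∑ ρ, A ν σ ρ * A ρ b c)) := by
    calc (∑ ρ, R ν a ρ * A ρ b c)
        = ∑ ρ, (-(W ν) * ((∑ μ, A μ a ρ * d μ) * A ρ b c)
            + (∑ σ, A ν a σ * W σ) * (d ρ * A ρ b c)
            + d a * ((∑ σ, A ν ρ σ * W σ) * A ρ b c)) :=
          Finset.sum_congr rfl fun ρ _ => by rw [hR]; ring
      _ = -(W ν) * (∑ ρ, (∑ μ, A μ a ρ * d μ) * A ρ b c)
            + (∑ σ, A ν a σ * W σ) * (∑ ρ, d ρ * A ρ b c)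
            + d a * (∑ ρ, (∑ σ, A ν ρ σ * W σ) * A ρ b c) := by
          rw [Finset.sum_add_distrib, Finset.sum_add_distrib,
            ← Finset.mul_sum, ← Finset.mul_sum, ← Finset.mul_sum]
      _ = _ := by rw [f1 a b c, hdA b c, f2 ν b c]
  have eL2 : (∑ ρ, A ν a ρ * R ρ b c)
      = (-(∑ μ, A μ b c * d μ)) * (∑ ρ, A ν a ρ * W ρ)
        + d c * (∑ σ, W σ * (∑ ρ, A ν a ρ * A ρ b σ))
        + d b * (∑ σ, W σ * (∑ ρ, A ν a ρ * A ρ c σ)) := by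
    calc (∑ ρ, A ν a ρ * R ρ b c)
        = ∑ ρ, ((-(∑ μ, A μ b c * d μ)) * (A ν a ρ * W ρ)
            + d c * (A ν a ρ * (∑ σ, A ρ b σ * W σ))
            + d b * (A ν a ρ * (∑ σ, A ρ c σ * W σ))) :=
          Finset.sum_congr rfl fun ρ _ => by rw [hR]; ring
      _ = (-(∑ μ, A μ b c * d μ)) * (∑ ρ, A ν a ρ * W ρ)
            + d c * (∑ ρ, A ν a ρ * (∑ σ, A ρ b σ * W σ))
            + d b * (∑ ρ, A ν a ρ * (∑ σ, A ρ c σ * W σ)) := by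
          rw [Finset.sum_add_distrib, Finset.sum_add_distrib,
            ← Finset.mul_sum, ← Finset.mul_sum, ← Finset.mul_sum]
      _ = _ := by rw [f3 ν a b, f3 ν a c]
  have eR1 : (∑ ρ, R ρ a b * A ν ρ c)
      = (-(∑ μ, A μ a b * d μ)) * (∑ ρ, A ν c ρ * W ρ)
        + d b * (∑ σ, W σ * (∑ ρ, A ν a ρ * A ρ σ c))
        + d a * (∑ σ, W σ * (∑ ρ, A ν b ρ * A ρ σ c)) := by
    calc (∑ ρ, R ρ a b * A ν ρ c)
        = ∑ ρ, ((-(∑ μ, A μ a b * d μ)) * (W ρ * A ν ρ c)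
            + d b * ((∑ σ, A ρ a σ * W σ) * A ν ρ c)
            + d a * ((∑ σ, A ρ b σ * W σ) * A ν ρ c)) :=
          Finset.sum_congr rfl fun ρ _ => by rw [hR]; ring
      _ = (-(∑ μ, A μ a b * d μ)) * (∑ ρ, W ρ * A ν ρ c)
            + d b * (∑ ρ, (∑ σ, A ρ a σ * W σ) * A ν ρ c)
            + d a * (∑ ρ, (∑ σ, A ρ b σ * W σ) * A ν ρ c) := by
          rw [Finset.sum_add_distrib, Finset.sum_add_distrib,
            ← Finset.mul_sum, ← Finset.mul_sum, ← Finset.mul_sum]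
      _ = _ := by rw [f4 ν a c, f4 ν b c, hWE ν c]
  have eR2 : (∑ ρ, A ρ a b * R ν ρ c)
      = -(W ν) * (∑ μ, d μ * (∑ ρ, A μ a ρ * A ρ b c))
        + d c * (∑ σ, W σ * (∑ ρ, A ν a ρ * A ρ b σ))
        + (∑ σ, A ν c σ * W σ) * (∑ μ, A μ a b * d μ) := by
    calc (∑ ρ, A ρ a b * R ν ρ c)
        = ∑ ρ, (-(W ν) * (A ρ a b * (∑ μ, A μ ρ c * d μ))
            + d c * (A ρ a b * (∑ σ, A ν ρ σ * W σ))
            + (∑ σ, A ν c σ * W σ) * (A ρ a b * d ρ)) :=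
          Finset.sum_congr rfl fun ρ _ => by rw [hR]; ring
      _ = -(W ν) * (∑ ρ, A ρ a b * (∑ μ, A μ ρ c * d μ))
            + d c * (∑ ρ, A ρ a b * (∑ σ, A ν ρ σ * W σ))
            + (∑ σ, A ν c σ * W σ) * (∑ ρ, A ρ a b * d ρ) := by
          rw [Finset.sum_add_distrib, Finset.sum_add_distrib,
            ← Finset.mul_sum, ← Finset.mul_sum, ← Finset.mul_sum]
      _ = _ := by rw [f1' a b c, f5 ν a b]
  rw [eL1, eL2, eR1, eR2]
  have g1 : (∑ σ, W σ * (∑ ρ, A ν σ ρ * A ρ b c))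
      = ∑ σ, W σ * (∑ ρ, A ν b ρ * A ρ σ c) :=
    Finset.sum_congr rfl fun σ _ => by rw [hM12 ν σ b c]
  have g2 : (∑ σ, W σ * (∑ ρ, A ν a ρ * A ρ c σ))
      = ∑ σ, W σ * (∑ ρ, A ν a ρ * A ρ σ c) :=
    Finset.sum_congr rfl fun σ _ => by rw [hM23 ν a c σ]
  rw [g1, g2]
  ring

end Alg

section Alg2
variable {n : ℕ} (A : Fin n → Fin n → Fin n → ℝ)
  (Bt : Fin n → Fin n → Fin n → Fin n → ℝ) (W : Fin n → ℝ)

lemma keyB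
    (hBc : ∀ ν a b c, Bt ν a b c = Bt ν b c a)
    (hdAE : ∀ σ ν a b c,
      (∑ ρ, (Bt ν σ a ρ * A ρ b c + A ν a ρ * Bt ρ σ b c))
        = ∑ ρ, (Bt ρ σ a b * A ν ρ c + A ρ a b * Bt ν σ ρ c))
    (F : Fin n → Fin n → Fin n → ℝ)
    (hF : ∀ ν a b, F ν a b = ∑ ρ, Bt ν a b ρ * W ρ) :
    ∀ a b c ν, (∑ ρ, F ν a ρ * A ρ b c) + (∑ ρ, A ν a ρ * F ρ b c)
      = (∑ ρ, F ρ a b * A ν ρ c) + (∑ ρ, A ρ a b * F ν ρ c) := by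
  intro a b c ν
  have t1 : (∑ ρ, F ν a ρ * A ρ b c) = ∑ σ, W σ * (∑ ρ, Bt ν σ a ρ * A ρ b c) := by
    calc (∑ ρ, F ν a ρ * A ρ b c)
        = ∑ ρ, (∑ σ, W σ * (Bt ν σ a ρ * A ρ b c)) := by
          refine Finset.sum_congr rfl fun ρ _ => ?_
          rw [hF, Finset.sum_mul]
          exact Finset.sum_congr rfl fun σ _ => by rw [← hBc ν σ a ρ]; ring
      _ = ∑ σ, ∑ ρ, W σ * (Bt ν σ a ρ * A ρ b c) := Finset.sum_comm
      _ = _ := Finset.sum_congr rfl fun σ _ => (Finset.mul_sum _ _ _).symm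
  have t2 : (∑ ρ, A ν a ρ * F ρ b c) = ∑ σ, W σ * (∑ ρ, A ν a ρ * Bt ρ σ b c) := by
    calc (∑ ρ, A ν a ρ * F ρ b c)
        = ∑ ρ, (∑ σ, W σ * (A ν a ρ * Bt ρ σ b c)) := by
          refine Finset.sum_congr rfl fun ρ _ => ?_
          rw [hF, Finset.mul_sum]
          exact Finset.sum_congr rfl fun σ _ => by rw [← hBc ρ σ b c]; ring
      _ = ∑ σ, ∑ ρ, W σ * (A ν a ρ * Bt ρ σ b c) := Finset.sum_comm
      _ = _ := Finset.sum_congr rfl fun σ _ => (Finset.mul_sum _ _ _).symm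
  have t3 : (∑ ρ, F ρ a b * A ν ρ c) = ∑ σ, W σ * (∑ ρ, Bt ρ σ a b * A ν ρ c) := by
    calc (∑ ρ, F ρ a b * A ν ρ c)
        = ∑ ρ, (∑ σ, W σ * (Bt ρ σ a b * A ν ρ c)) := by
          refine Finset.sum_congr rfl fun ρ _ => ?_
          rw [hF, Finset.sum_mul]
          exact Finset.sum_congr rfl fun σ _ => by rw [← hBc ρ σ a b]; ring
      _ = ∑ σ, ∑ ρ, W σ * (Bt ρ σ a b * A ν ρ c) := Finset.sum_comm
      _ = _ := Finset.sum_congr rfl fun σ _ => (Finset.mul_sum _ _ _).symm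
  have t4 : (∑ ρ, A ρ a b * F ν ρ c) = ∑ σ, W σ * (∑ ρ, A ρ a b * Bt ν σ ρ c) := by
    calc (∑ ρ, A ρ a b * F ν ρ c)
        = ∑ ρ, (∑ σ, W σ * (A ρ a b * Bt ν σ ρ c)) := by
          refine Finset.sum_congr rfl fun ρ _ => ?_
          rw [hF, Finset.mul_sum]
          exact Finset.sum_congr rfl fun σ _ => by rw [← hBc ν σ ρ c]; ring
      _ = ∑ σ, ∑ ρ, W σ * (A ρ a b * Bt ν σ ρ c) := Finset.sum_comm
      _ = _ := Finset.sum_congr rfl fun σ _ => (Finset.mul_sum _ _ _).symm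
  rw [t1, t2, t3, t4, ← Finset.sum_add_distrib, ← Finset.sum_add_distrib]
  refine Finset.sum_congr rfl fun σ _ => ?_
  rw [← mul_add, ← mul_add, ← Finset.sum_add_distrib, ← Finset.sum_add_distrib,
    hdAE σ ν a b c]

lemma keyC
    (hA : ∀ ν a b, A ν a b = A ν b a)
    (hAE : ∀ ν a b c, ∑ ρ, A ν a ρ * A ρ b c = ∑ ρ, A ρ a b * A ν ρ c)
    (Q : Fin n → Fin n → Fin n → ℝ)
    (hQ : ∀ ν a b, Q ν a b = ∑ ρ, A ν b ρ * (∑ σ, A ρ a σ * W σ)) :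
    ∀ a b c ν, (∑ ρ, Q ν a ρ * A ρ b c) + (∑ ρ, A ν a ρ * Q ρ b c)
      = (∑ ρ, Q ρ a b * A ν ρ c) + (∑ ρ, A ρ a b * Q ν ρ c) := by
  intro a b c ν
  have hM23 : ∀ ν a b c, (∑ ρ, A ν a ρ * A ρ b c) = ∑ ρ, A ν a ρ * A ρ c b :=
    fun ν a b c => Finset.sum_congr rfl fun ρ _ => by rw [hA ρ b c]
  have hMc : ∀ ν a b c, (∑ ρ, A ν a ρ * A ρ b c) = ∑ ρ, A ν c ρ * A ρ a b := by
    intro ν a b c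
    rw [hAE ν a b c]
    exact Finset.sum_congr rfl fun ρ _ => by rw [hA ν ρ c]; ring
  have hM12 : ∀ ν a b c, (∑ ρ, A ν a ρ * A ρ b c) = ∑ ρ, A ν b ρ * A ρ a c := by
    intro ν a b c
    rw [hMc ν a b c, hMc ν c a b, hM23 ν b c a]
  have hM13 : ∀ ν a b c, (∑ ρ, A ν a ρ * A ρ b c) = ∑ ρ, A ν c ρ * A ρ b a := by
    intro ν a b c
    rw [hMc ν a b c, hM23 ν c a b]
  -- canonical form of Q
  have hQM : ∀ ν a b, Q ν a b = ∑ σ, W σ * (∑ ρ, A ν b ρ * A ρ a σ) := by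
    intro ν a b
    calc Q ν a b = ∑ ρ, (∑ σ, W σ * (A ν b ρ * A ρ a σ)) := by
          rw [hQ]
          refine Finset.sum_congr rfl fun ρ _ => ?_
          rw [Finset.mul_sum]
          exact Finset.sum_congr rfl fun σ _ => by ring
      _ = ∑ σ, ∑ ρ, W σ * (A ν b ρ * A ρ a σ) := Finset.sum_comm
      _ = _ := Finset.sum_congr rfl fun σ _ => (Finset.mul_sum _ _ _).symm
  -- generic redistribution: sum against a multiplier
  have lift : ∀ (P : Fin n → Fin n → ℝ) (g : Fin n → ℝ),
      (∑ ρ, (∑ σ, W σ * P σ ρ) * g ρ) = ∑ σ, W σ * (∑ ρ, P σ ρ * g ρ) := by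
    intro P g
    calc (∑ ρ, (∑ σ, W σ * P σ ρ) * g ρ)
        = ∑ ρ, ∑ σ, W σ * (P σ ρ * g ρ) := by
          refine Finset.sum_congr rfl fun ρ _ => ?_
          rw [Finset.sum_mul]
          exact Finset.sum_congr rfl fun σ _ => by ring
      _ = ∑ σ, ∑ ρ, W σ * (P σ ρ * g ρ) := Finset.sum_comm
      _ = _ := Finset.sum_congr rfl fun σ _ => (Finset.mul_sum _ _ _).symm
  have lift' : ∀ (P : Fin n → Fin n → ℝ) (g : Fin n → ℝ),
      (∑ ρ, g ρ * (∑ σ, W σ * P σ ρ)) = ∑ σ, W σ * (∑ ρ, g ρ * P σ ρ) := by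
    intro P g
    calc (∑ ρ, g ρ * (∑ σ, W σ * P σ ρ))
        = ∑ ρ, ∑ σ, W σ * (g ρ * P σ ρ) := by
          refine Finset.sum_congr rfl fun ρ _ => ?_
          rw [Finset.mul_sum]
          exact Finset.sum_congr rfl fun σ _ => by ring
      _ = ∑ σ, ∑ ρ, W σ * (g ρ * P σ ρ) := Finset.sum_comm
      _ = _ := Finset.sum_congr rfl fun σ _ => (Finset.mul_sum _ _ _).symm
  -- exchange lemma: ∑ρ (∑μ A ν a μ * A μ b ρ) * g ρ reshuffle
  have swap2 : ∀ (h : Fin n → Fin n → ℝ) (g : Fin n → ℝ),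
      (∑ ρ, (∑ μ, h μ ρ) * g ρ) = ∑ μ, ∑ ρ, h μ ρ * g ρ := by
    intro h g
    simp only [Finset.sum_mul]; exact Finset.sum_comm
  have swap2' : ∀ (h : Fin n → Fin n → ℝ) (g : Fin n → ℝ),
      (∑ ρ, g ρ * (∑ μ, h μ ρ)) = ∑ μ, ∑ ρ, g ρ * h μ ρ := by
    intro h g
    simp only [Finset.mul_sum]; exact Finset.sum_comm
  -- four canonical computations
  have c1 : (∑ ρ, Q ν a ρ * A ρ b c)
      = ∑ σ, W σ * (∑ μ, A ν σ μ * (∑ ρ, A μ a ρ * A ρ b c)) := by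
    have e0 : (∑ ρ, Q ν a ρ * A ρ b c)
        = ∑ σ, W σ * (∑ ρ, (∑ μ, A ν σ μ * A μ a ρ) * A ρ b c) := by
      have := lift (fun σ ρ => ∑ μ, A ν σ μ * A μ a ρ) (fun ρ => A ρ b c)
      rw [← this]
      refine Finset.sum_congr rfl fun ρ _ => ?_
      rw [hQM ν a ρ]
      congr 1
      exact Finset.sum_congr rfl fun σ _ => by rw [hM13 ν ρ a σ]
    rw [e0]
    refine Finset.sum_congr rfl fun σ _ => ?_
    congr 1
    rw [swap2 (fun μ ρ => A ν σ μ * A μ a ρ) (fun ρ => A ρ b c)]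
    refine Finset.sum_congr rfl fun μ _ => ?_
    rw [Finset.mul_sum]
    exact Finset.sum_congr rfl fun ρ _ => by ring
  have c4 : (∑ ρ, A ρ a b * Q ν ρ c)
      = ∑ σ, W σ * (∑ μ, A ν σ μ * (∑ ρ, A μ a ρ * A ρ b c)) := by
    have e0 : (∑ ρ, A ρ a b * Q ν ρ c)
        = ∑ σ, W σ * (∑ ρ, A ρ a b * (∑ μ, A ν σ μ * A μ c ρ)) := by
      have := lift' (fun σ ρ => ∑ μ, A ν σ μ * A μ c ρ) (fun ρ => A ρ a b)
      rw [← this]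
      refine Finset.sum_congr rfl fun ρ _ => ?_
      rw [hQM ν ρ c]
      congr 1
      exact Finset.sum_congr rfl fun σ _ => by rw [hMc ν c ρ σ]
    rw [e0]
    refine Finset.sum_congr rfl fun σ _ => ?_
    congr 1
    rw [swap2' (fun μ ρ => A ν σ μ * A μ c ρ) (fun ρ => A ρ a b)]
    refine Finset.sum_congr rfl fun μ _ => ?_
    calc (∑ ρ, A ρ a b * (A ν σ μ * A μ c ρ))
        = A ν σ μ * ∑ ρ, A μ c ρ * A ρ a b := by
          rw [Finset.mul_sum]; exact Finset.sum_congr rfl fun ρ _ => by ring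
      _ = A ν σ μ * ∑ ρ, A μ a ρ * A ρ b c := by rw [← hMc μ a b c]
      _ = _ := by rw [Finset.mul_sum]
  have c2 : (∑ ρ, A ν a ρ * Q ρ b c)
      = ∑ σ, W σ * (∑ μ, (∑ ρ, A ν a ρ * A ρ b μ) * A μ σ c) := by
    have e0 : (∑ ρ, A ν a ρ * Q ρ b c)
        = ∑ σ, W σ * (∑ ρ, A ν a ρ * (∑ μ, A ρ b μ * A μ σ c)) := by
      have := lift' (fun σ ρ => ∑ μ, A ρ b μ * A μ σ c) (fun ρ => A ν a ρ)
      rw [← this]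
      refine Finset.sum_congr rfl fun ρ _ => ?_
      rw [hQM ρ b c]
      congr 1
      refine Finset.sum_congr rfl fun σ _ => ?_
      congr 1
      rw [← hMc ρ b σ c]
    rw [e0]
    refine Finset.sum_congr rfl fun σ _ => ?_
    congr 1
    rw [swap2' (fun μ ρ => A ρ b μ * A μ σ c) (fun ρ => A ν a ρ)]
    rw [swap2 (fun ρ μ => A ν a ρ * A ρ b μ) (fun μ => A μ σ c)]
    refine Finset.sum_comm.trans ?_
    exact Finset.sum_congr rfl fun μ _ => Finset.sum_congr rfl fun ρ _ => by ring
  have c3 : (∑ ρ, Q ρ a b * A ν ρ c)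
      = ∑ σ, W σ * (∑ μ, (∑ ρ, A ν a ρ * A ρ b μ) * A μ σ c) := by
    have e0 : (∑ ρ, Q ρ a b * A ν ρ c)
        = ∑ σ, W σ * (∑ ρ, (∑ μ, A ρ b μ * A μ a σ) * A ν ρ c) := by
      have := lift (fun σ ρ => ∑ μ, A ρ b μ * A μ a σ) (fun ρ => A ν ρ c)
      rw [← this]
      refine Finset.sum_congr rfl fun ρ _ => ?_
      rw [hQM ρ a b]
    rw [e0]
    refine Finset.sum_congr rfl fun σ _ => ?_
    congr 1
    -- ∑ρ (∑μ A ρ b μ * A μ a σ) * A ν ρ c = ∑μ A μ a σ * (∑ρ A ρ b μ * A ν ρ c)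
    rw [swap2 (fun μ ρ => A ρ b μ * A μ a σ) (fun ρ => A ν ρ c)]
    have step1 : ∀ μ, (∑ ρ, A ρ b μ * A μ a σ * A ν ρ c)
        = A μ a σ * (∑ ρ, A ν b ρ * A ρ μ c) := by
      intro μ
      calc (∑ ρ, A ρ b μ * A μ a σ * A ν ρ c)
          = A μ a σ * ∑ ρ, A ρ b μ * A ν ρ c := by
            rw [Finset.mul_sum]; exact Finset.sum_congr rfl fun ρ _ => by ring
        _ = _ := by rw [← hAE ν b μ c]
    rw [Finset.sum_congr rfl fun μ _ => step1 μ]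
    -- now ∑μ A μ a σ * (∑ρ A ν b ρ * A ρ μ c) = ∑μ (∑ρ A ν a ρ * A ρ b μ) * A μ σ c
    calc (∑ μ, A μ a σ * (∑ ρ, A ν b ρ * A ρ μ c))
        = ∑ ρ, A ν b ρ * (∑ μ, A ρ μ c * A μ a σ) := by
          simp only [Finset.mul_sum]
          rw [Finset.sum_comm]
          exact Finset.sum_congr rfl fun ρ _ => Finset.sum_congr rfl fun μ _ => by ring
      _ = ∑ ρ, A ν b ρ * (∑ μ, A ρ a μ * A μ σ c) := by
          refine Finset.sum_congr rfl fun ρ _ => ?_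
          congr 1
          calc (∑ μ, A ρ μ c * A μ a σ)
              = ∑ μ, A ρ c μ * A μ a σ :=
                Finset.sum_congr rfl fun μ _ => by rw [hA ρ μ c]
            _ = ∑ μ, A ρ a μ * A μ σ c := by rw [← hMc ρ a σ c]
      _ = ∑ μ, (∑ ρ, A ν b ρ * A ρ a μ) * A μ σ c := by
          simp only [Finset.mul_sum, Finset.sum_mul]
          rw [Finset.sum_comm]
          exact Finset.sum_congr rfl fun ρ _ => Finset.sum_congr rfl fun μ _ => by ring
      _ = ∑ μ, (∑ ρ, A ν a ρ * A ρ b μ) * A μ σ c := by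
          refine Finset.sum_congr rfl fun μ _ => ?_
          rw [← hM12 ν a b μ]
  rw [c1, c2, c3, c4]
  ring
end Alg2

lemma key_alg {n : ℕ} (A : Fin n → Fin n → Fin n → ℝ)
    (Bt : Fin n → Fin n → Fin n → Fin n → ℝ) (W d : Fin n → ℝ) (u t : ℝ)
    (hA : ∀ ν a b, A ν a b = A ν b a)
    (hAE : ∀ ν a b c, ∑ ρ, A ν a ρ * A ρ b c = ∑ ρ, A ρ a b * A ν ρ c)
    (hBc : ∀ ν a b c, Bt ν a b c = Bt ν b c a)
    (hdAE : ∀ σ ν a b c,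
      (∑ ρ, (Bt ν σ a ρ * A ρ b c + A ν a ρ * Bt ρ σ b c))
        = ∑ ρ, (Bt ρ σ a b * A ν ρ c + A ρ a b * Bt ν σ ρ c))
    (R : Fin n → Fin n → Fin n → ℝ)
    (hR : ∀ ν a b, R ν a b = -(∑ μ, A μ a b * d μ) * W ν
        + d b * (∑ ρ, A ν a ρ * W ρ) + d a * (∑ ρ, A ν b ρ * W ρ)
        + u * (∑ ρ, Bt ν a b ρ * W ρ)
        - t * (∑ ρ, A ν b ρ * (∑ σ, A ρ a σ * W σ))) :
    ∀ a b c ν, (∑ ρ, R ν a ρ * A ρ b c) + (∑ ρ, A ν a ρ * R ρ b c)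
      = (∑ ρ, R ρ a b * A ν ρ c) + (∑ ρ, A ρ a b * R ν ρ c) := by
  intro a b c ν
  have hL1 : (∑ ρ, R ν a ρ * A ρ b c)
      = (∑ ρ, (-(∑ μ, A μ a ρ * d μ) * W ν + d ρ * (∑ σ, A ν a σ * W σ)
            + d a * (∑ σ, A ν ρ σ * W σ)) * A ρ b c)
        + u * (∑ ρ, (∑ σ, Bt ν a ρ σ * W σ) * A ρ b c)
        - t * (∑ ρ, (∑ σ', A ν ρ σ' * (∑ σ, A σ' a σ * W σ)) * A ρ b c) := by
    calc (∑ ρ, R ν a ρ * A ρ b c)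
        = ∑ ρ, ((-(∑ μ, A μ a ρ * d μ) * W ν + d ρ * (∑ σ, A ν a σ * W σ)
              + d a * (∑ σ, A ν ρ σ * W σ)) * A ρ b c
            + u * ((∑ σ, Bt ν a ρ σ * W σ) * A ρ b c)
            - t * ((∑ σ', A ν ρ σ' * (∑ σ, A σ' a σ * W σ)) * A ρ b c)) :=
          Finset.sum_congr rfl fun ρ _ => by rw [hR]; ring
      _ = _ := by
          rw [Finset.sum_sub_distrib, Finset.sum_add_distrib,
            ← Finset.mul_sum, ← Finset.mul_sum]
  have hL2 : (∑ ρ, A ν a ρ * R ρ b c)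
      = (∑ ρ, A ν a ρ * (-(∑ μ, A μ b c * d μ) * W ρ + d c * (∑ σ, A ρ b σ * W σ)
            + d b * (∑ σ, A ρ c σ * W σ)))
        + u * (∑ ρ, A ν a ρ * (∑ σ, Bt ρ b c σ * W σ))
        - t * (∑ ρ, A ν a ρ * (∑ σ', A ρ c σ' * (∑ σ, A σ' b σ * W σ))) := by
    calc (∑ ρ, A ν a ρ * R ρ b c)
        = ∑ ρ, (A ν a ρ * (-(∑ μ, A μ b c * d μ) * W ρ + d c * (∑ σ, A ρ b σ * W σ)
              + d b * (∑ σ, A ρ c σ * W σ))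
            + u * (A ν a ρ * (∑ σ, Bt ρ b c σ * W σ))
            - t * (A ν a ρ * (∑ σ', A ρ c σ' * (∑ σ, A σ' b σ * W σ)))) :=
          Finset.sum_congr rfl fun ρ _ => by rw [hR]; ring
      _ = _ := by
          rw [Finset.sum_sub_distrib, Finset.sum_add_distrib,
            ← Finset.mul_sum, ← Finset.mul_sum]
  have hR1 : (∑ ρ, R ρ a b * A ν ρ c)
      = (∑ ρ, (-(∑ μ, A μ a b * d μ) * W ρ + d b * (∑ σ, A ρ a σ * W σ)
            + d a * (∑ σ, A ρ b σ * W σ)) * A ν ρ c)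
        + u * (∑ ρ, (∑ σ, Bt ρ a b σ * W σ) * A ν ρ c)
        - t * (∑ ρ, (∑ σ', A ρ b σ' * (∑ σ, A σ' a σ * W σ)) * A ν ρ c) := by
    calc (∑ ρ, R ρ a b * A ν ρ c)
        = ∑ ρ, ((-(∑ μ, A μ a b * d μ) * W ρ + d b * (∑ σ, A ρ a σ * W σ)
              + d a * (∑ σ, A ρ b σ * W σ)) * A ν ρ c
            + u * ((∑ σ, Bt ρ a b σ * W σ) * A ν ρ c)
            - t * ((∑ σ', A ρ b σ' * (∑ σ, A σ' a σ * W σ)) * A ν ρ c)) :=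
          Finset.sum_congr rfl fun ρ _ => by rw [hR]; ring
      _ = _ := by
          rw [Finset.sum_sub_distrib, Finset.sum_add_distrib,
            ← Finset.mul_sum, ← Finset.mul_sum]
  have hR2 : (∑ ρ, A ρ a b * R ν ρ c)
      = (∑ ρ, A ρ a b * (-(∑ μ, A μ ρ c * d μ) * W ν + d c * (∑ σ, A ν ρ σ * W σ)
            + d ρ * (∑ σ, A ν c σ * W σ)))
        + u * (∑ ρ, A ρ a b * (∑ σ, Bt ν ρ c σ * W σ))
        - t * (∑ ρ, A ρ a b * (∑ σ', A ν c σ' * (∑ σ, A σ' ρ σ * W σ))) := by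
    calc (∑ ρ, A ρ a b * R ν ρ c)
        = ∑ ρ, (A ρ a b * (-(∑ μ, A μ ρ c * d μ) * W ν + d c * (∑ σ, A ν ρ σ * W σ)
              + d ρ * (∑ σ, A ν c σ * W σ))
            + u * (A ρ a b * (∑ σ, Bt ν ρ c σ * W σ))
            - t * (A ρ a b * (∑ σ', A ν c σ' * (∑ σ, A σ' ρ σ * W σ)))) :=
          Finset.sum_congr rfl fun ρ _ => by rw [hR]; ring
      _ = _ := by
          rw [Finset.sum_sub_distrib, Finset.sum_add_distrib,
            ← Finset.mul_sum, ← Finset.mul_sum]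
  have kA : (∑ ρ, (-(∑ μ, A μ a ρ * d μ) * W ν + d ρ * (∑ σ, A ν a σ * W σ)
            + d a * (∑ σ, A ν ρ σ * W σ)) * A ρ b c)
        + (∑ ρ, A ν a ρ * (-(∑ μ, A μ b c * d μ) * W ρ + d c * (∑ σ, A ρ b σ * W σ)
            + d b * (∑ σ, A ρ c σ * W σ)))
      = (∑ ρ, (-(∑ μ, A μ a b * d μ) * W ρ + d b * (∑ σ, A ρ a σ * W σ)
            + d a * (∑ σ, A ρ b σ * W σ)) * A ν ρ c)
        + (∑ ρ, A ρ a b * (-(∑ μ, A μ ρ c * d μ) * W ν + d c * (∑ σ, A ν ρ σ * W σ)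
            + d ρ * (∑ σ, A ν c σ * W σ))) :=
    keyA A W d hA hAE
      (fun X y z => -(∑ μ, A μ y z * d μ) * W X + d z * (∑ ρ, A X y ρ * W ρ)
        + d y * (∑ ρ, A X z ρ * W ρ)) (fun _ _ _ => rfl) a b c ν
  have kB : (∑ ρ, (∑ σ, Bt ν a ρ σ * W σ) * A ρ b c)
        + (∑ ρ, A ν a ρ * (∑ σ, Bt ρ b c σ * W σ))
      = (∑ ρ, (∑ σ, Bt ρ a b σ * W σ) * A ν ρ c)
        + (∑ ρ, A ρ a b * (∑ σ, Bt ν ρ c σ * W σ)) :=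
    keyB A Bt W hBc hdAE (fun X y z => ∑ ρ, Bt X y z ρ * W ρ) (fun _ _ _ => rfl) a b c ν
  have kC : (∑ ρ, (∑ σ', A ν ρ σ' * (∑ σ, A σ' a σ * W σ)) * A ρ b c)
        + (∑ ρ, A ν a ρ * (∑ σ', A ρ c σ' * (∑ σ, A σ' b σ * W σ)))
      = (∑ ρ, (∑ σ', A ρ b σ' * (∑ σ, A σ' a σ * W σ)) * A ν ρ c)
        + (∑ ρ, A ρ a b * (∑ σ', A ν c σ' * (∑ σ, A σ' ρ σ * W σ))) :=
    keyC A W hA hAE (fun X y z => ∑ ρ, A X z ρ * (∑ σ, A ρ y σ * W σ))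
      (fun _ _ _ => rfl) a b c ν
  rw [hL1, hL2, hR1, hR2]
  linear_combination kA + u * kB - t * kC

/-- the functions `G^α = Σ_{j=0}^{k} (−1)^j v_j^β (w_{k−j})^α_γ`,
built from the nonlocal potentials `w_j` and `v_j`, are symmetry characteristics of
the oriented associativity equations. -/
theorem vw_hierarchy_is_symmetry
    {n : ℕ} (hn : 1 ≤ n) (k : ℕ)
    (K : Fin n → (Fin n → ℝ) → ℝ)
    (w : ℕ → Fin n → Fin n → (Fin n → ℝ) → ℝ)
    (v : ℕ → Fin n → (Fin n → ℝ) → ℝ)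
    (hK : ∀ α, ContDiff ℝ (⊤ : ℕ∞) (K α))
    (hw : ∀ j ≤ k, ∀ α β, ContDiff ℝ (⊤ : ℕ∞) (w j α β))
    (hv : ∀ j ≤ k, ∀ β, ContDiff ℝ (⊤ : ℕ∞) (v j β))
    (hAE : ∀ α β γ ν, ∀ x : Fin n → ℝ,
      ∑ ρ, pd α (pd ρ (K ν)) x * pd β (pd γ (K ρ)) x
        = ∑ ρ, pd α (pd β (K ρ)) x * pd ρ (pd γ (K ν)) x)
    (hw0 : ∀ α β, ∀ x : Fin n → ℝ, w 0 α β x = if α = β then (1 : ℝ) else 0)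
    (hw1 : 1 ≤ k → ∀ α β, ∀ x : Fin n → ℝ, w 1 α β x = pd β (K α) x)
    (hwrec : ∀ j, 1 ≤ j → j ≤ k → ∀ α β γ, ∀ x : Fin n → ℝ,
      pd α (w j β γ) x = ∑ ρ, pd α (pd ρ (K β)) x * w (j - 1) ρ γ x)
    (hv0 : ∀ β, ∀ x : Fin n → ℝ, v 0 β x = x β)
    (hv1 : 1 ≤ k → ∀ β, ∀ x : Fin n → ℝ, v 1 β x = K β x)
    (hvrec : ∀ j, 2 ≤ j → j ≤ k → ∀ α β γ, ∀ x : Fin n → ℝ,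
      pd α (pd γ (v j β)) x = ∑ ν, pd α (pd γ (K ν)) x * pd ν (v (j - 1) β) x) :
    ∀ β γ, ∀ α' β' γ' ν', ∀ x : Fin n → ℝ,
      (∑ ρ, pd α' (pd ρ (fun y => ∑ j ∈ Finset.range (k + 1),
            (-1 : ℝ) ^ j * v j β y * w (k - j) ν' γ y)) x * pd β' (pd γ' (K ρ)) x)
        + (∑ ρ, pd α' (pd ρ (K ν')) x * pd β' (pd γ' (fun y => ∑ j ∈ Finset.range (k + 1),
            (-1 : ℝ) ^ j * v j β y * w (k - j) ρ γ y)) x)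
      = (∑ ρ, pd α' (pd β' (fun y => ∑ j ∈ Finset.range (k + 1),
            (-1 : ℝ) ^ j * v j β y * w (k - j) ρ γ y)) x * pd ρ (pd γ' (K ν')) x)
        + (∑ ρ, pd α' (pd β' (K ρ)) x * pd ρ (pd γ' (fun y => ∑ j ∈ Finset.range (k + 1),
            (-1 : ℝ) ^ j * v j β y * w (k - j) ν' γ y)) x) := by
  intro β γ a b c ν x
  have dat : ∀ {f : (Fin n → ℝ) → ℝ}, ContDiff ℝ (⊤ : ℕ∞) f → ∀ y : Fin n → ℝ, DifferentiableAt ℝ f y :=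
    fun h y => (h.differentiable (by simp)).differentiableAt
  have hKc2 : ∀ (α i j : Fin n), ContDiff ℝ (⊤ : ℕ∞) (pd i (pd j (K α))) :=
    fun α i j => contDiff_pd i (contDiff_pd j (hK α))
  have hwd : ∀ m, m ≤ k → ∀ (i α : Fin n) (y : Fin n → ℝ),
      pd i (w m α γ) y = ∑ ρ, pd i (pd ρ (K α)) y * (if m = 0 then 0 else w (m-1) ρ γ y) := by
    intro m hm i α y
    match m with
    | 0 =>
      have e : w 0 α γ = fun _ => (if α = γ then (1:ℝ) else 0) := funext fun z => hw0 α γ z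
      rw [e, pd_const]
      simp
    | (mm+1) =>
      rw [hwrec (mm+1) (by omega) hm i α γ y]
      simp
  have hwdd : ∀ m, m ≤ k → ∀ (p q α : Fin n),
      pd p (pd q (w m α γ)) x
        = ∑ ρ, (pd p (pd q (pd ρ (K α))) x * (if m = 0 then 0 else w (m-1) ρ γ x)
            + pd q (pd ρ (K α)) x
              * (∑ σ, pd p (pd σ (K ρ)) x * (if m - 1 = 0 then 0 else w (m-1-1) σ γ x))) := by
    intro m hm p q α
    match m with
    | 0 =>
      have e : w 0 α γ = fun _ => (if α = γ then (1:ℝ) else 0) := funext fun z => hw0 α γ z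
      rw [e, pd_const, pd_const]
      simp
    | (mm+1) =>
      have e : pd q (w (mm+1) α γ)
          = fun y => ∑ ρ, pd q (pd ρ (K α)) y * w mm ρ γ y := by
        funext y
        rw [hwrec (mm+1) (by omega) hm q α γ y]
        norm_num
      rw [e]
      rw [pd_sum Finset.univ p (fun ρ => fun y => pd q (pd ρ (K α)) y * w mm ρ γ y)
        (fun ρ _ => dat ((hKc2 α q ρ).mul (hw mm (by omega) ρ γ)) x)]
      refine Finset.sum_congr rfl fun ρ _ => ?_
      rw [pd_mul p (dat (hKc2 α q ρ) x) (dat (hw mm (by omega) ρ γ) x)]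
      rw [hwd mm (by omega) p ρ x]
      simp
  have hdv0 : ∀ (i : Fin n) (y : Fin n → ℝ), pd i (v 0 β) y = (Pi.single i 1 : Fin n → ℝ) β := by
    intro i y
    have e : v 0 β = fun z => z β := funext fun z => hv0 β z
    rw [e]
    show fderiv ℝ (fun z : Fin n → ℝ => z β) y (Pi.single i 1) = _
    have e2 : (fun z : Fin n → ℝ => z β)
        = (ContinuousLinearMap.proj β : ((_ : Fin n) → ℝ) →L[ℝ] ℝ) := rfl
    rw [e2, ContinuousLinearMap.fderiv]
    rfl
  have hvdd : ∀ j, j ≤ k → ∀ (p q : Fin n),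
      pd p (pd q (v j β)) x
        = ∑ μ, pd p (pd q (K μ)) x * (if j = 0 then 0 else pd μ (v (j-1) β) x) := by
    intro j hj p q
    match j with
    | 0 =>
      have e : pd q (v 0 β) = fun _ => (Pi.single q 1 : Fin n → ℝ) β := funext fun y => hdv0 q y
      rw [e, pd_const]
      simp
    | 1 =>
      have e : v 1 β = K β := funext fun y => hv1 hj β y
      rw [e]
      symm
      calc (∑ μ, pd p (pd q (K μ)) x * (if (1:ℕ) = 0 then 0 else pd μ (v (1-1) β) x))
          = ∑ μ, pd p (pd q (K μ)) x * (if β = μ then 1 else 0) := by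
            refine Finset.sum_congr rfl fun μ _ => ?_
            rw [if_neg one_ne_zero, show (1:ℕ)-1 = 0 from rfl, hdv0 μ x, Pi.single_apply]
        _ = pd p (pd q (K β)) x := by
            simp [mul_ite]
    | (jj+2) =>
      rw [hvrec (jj+2) (by omega) hj p β q x]
      simp
  have hvk : ∀ j, j ∈ Finset.range (k+1) → ContDiff ℝ (⊤ : ℕ∞) (v j β) :=
    fun j hj => hv j (Nat.lt_succ_iff.mp (Finset.mem_range.mp hj)) β
  have hwk : ∀ (j : ℕ) (α' : Fin n), ContDiff ℝ (⊤ : ℕ∞) (w (k-j) α' γ) :=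
    fun j α' => hw (k-j) (Nat.sub_le k j) α' γ
  have hGd : ∀ (α p q : Fin n),
      pd p (pd q (fun y => ∑ j ∈ Finset.range (k+1), (-1:ℝ)^j * v j β y * w (k-j) α γ y)) x
      = ∑ j ∈ Finset.range (k+1), (-1:ℝ)^j *
          (pd p (pd q (v j β)) x * w (k-j) α γ x
           + pd q (v j β) x * pd p (w (k-j) α γ) x
           + pd p (v j β) x * pd q (w (k-j) α γ) x
           + v j β x * pd p (pd q (w (k-j) α γ)) x) := by
    intro α p q
    have hG1 : pd q (fun y => ∑ j ∈ Finset.range (k+1), (-1:ℝ)^j * v j β y * w (k-j) α γ y)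
        = fun y => ∑ j ∈ Finset.range (k+1),
            ((-1:ℝ)^j * (pd q (v j β) y * w (k-j) α γ y + v j β y * pd q (w (k-j) α γ) y)) := by
      funext y
      rw [pd_sum (Finset.range (k+1)) q
        (fun j => fun y => (-1:ℝ)^j * v j β y * w (k-j) α γ y)
        (fun j hj => dat ((contDiff_const.mul (hvk j hj)).mul (hwk j α)) y)]
      refine Finset.sum_congr rfl fun j hj => ?_
      rw [pd_mul q (dat (contDiff_const.mul (hvk j hj)) y) (dat (hwk j α) y),
        pd_const_mul q _ (dat (hvk j hj) y)]
      ring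
    rw [hG1]
    rw [pd_sum (Finset.range (k+1)) p
      (fun j => fun y => (-1:ℝ)^j * (pd q (v j β) y * w (k-j) α γ y
        + v j β y * pd q (w (k-j) α γ) y))
      (fun j hj => dat (contDiff_const.mul
        (((contDiff_pd q (hvk j hj)).mul (hwk j α)).add
          ((hvk j hj).mul (contDiff_pd q (hwk j α))))) x)]
    refine Finset.sum_congr rfl fun j hj => ?_
    rw [pd_const_mul p _ (dat (((contDiff_pd q (hvk j hj)).mul (hwk j α)).add
        ((hvk j hj).mul (contDiff_pd q (hwk j α)))) x),
      pd_add p (dat ((contDiff_pd q (hvk j hj)).mul (hwk j α)) x)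
        (dat ((hvk j hj).mul (contDiff_pd q (hwk j α))) x),
      pd_mul p (dat (contDiff_pd q (hvk j hj)) x) (dat (hwk j α) x),
      pd_mul p (dat (hvk j hj) x) (dat (contDiff_pd q (hwk j α)) x)]
    ring
  set R : ℕ → Fin n → Fin n → Fin n → ℝ := fun j X p q =>
    -(∑ μ, pd p (pd q (K μ)) x * pd μ (v j β) x) * w (k-1-j) X γ x
    + pd q (v j β) x * (∑ ρ, pd p (pd ρ (K X)) x * w (k-1-j) ρ γ x)
    + pd p (v j β) x * (∑ ρ, pd q (pd ρ (K X)) x * w (k-1-j) ρ γ x)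
    + v j β x * (∑ ρ, pd p (pd q (pd ρ (K X))) x * w (k-1-j) ρ γ x)
    - (if j = 0 then 0 else v (j-1) β x)
        * (∑ ρ, pd q (pd ρ (K X)) x * (∑ σ, pd p (pd σ (K ρ)) x * w (k-1-j) σ γ x))
    with hRdef
  have hD : ∀ (α p q : Fin n),
      pd p (pd q (fun y => ∑ j ∈ Finset.range (k+1), (-1:ℝ)^j * v j β y * w (k-j) α γ y)) x
      = ∑ j ∈ Finset.range k, (-1:ℝ)^j * R j α p q := by
    intro α p q
    rw [hGd α p q]
    have estep : ∀ j ∈ Finset.range (k+1),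
        (-1:ℝ)^j *
          (pd p (pd q (v j β)) x * w (k-j) α γ x
           + pd q (v j β) x * pd p (w (k-j) α γ) x
           + pd p (v j β) x * pd q (w (k-j) α γ) x
           + v j β x * pd p (pd q (w (k-j) α γ)) x)
        = ((-1:ℝ)^j * ((∑ μ, pd p (pd q (K μ)) x
              * (if j = 0 then 0 else pd μ (v (j-1) β) x)) * w (k-j) α γ x))
          + ((-1:ℝ)^j *
            (pd q (v j β) x * (∑ ρ, pd p (pd ρ (K α)) x
                * (if k - j = 0 then 0 else w (k-j-1) ρ γ x))
             + pd p (v j β) x * (∑ ρ, pd q (pd ρ (K α)) x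
                * (if k - j = 0 then 0 else w (k-j-1) ρ γ x))
             + v j β x * (∑ ρ, pd p (pd q (pd ρ (K α))) x
                * (if k - j = 0 then 0 else w (k-j-1) ρ γ x))))
          + ((-1:ℝ)^j * (v j β x * (∑ ρ, pd q (pd ρ (K α)) x
              * (∑ σ, pd p (pd σ (K ρ)) x
                  * (if k - j - 1 = 0 then 0 else w (k-j-1-1) σ γ x))))) := by
      intro j hj
      have hjk : j ≤ k := Nat.lt_succ_iff.mp (Finset.mem_range.mp hj)
      rw [hvdd j hjk p q, hwd (k-j) (Nat.sub_le k j) p α x, hwd (k-j) (Nat.sub_le k j) q α x,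
        hwdd (k-j) (Nat.sub_le k j) p q α, Finset.sum_add_distrib]
      ring
    rw [Finset.sum_congr rfl estep, Finset.sum_add_distrib, Finset.sum_add_distrib]
    have eA : (∑ j ∈ Finset.range (k+1), (-1:ℝ)^j * ((∑ μ, pd p (pd q (K μ)) x
          * (if j = 0 then 0 else pd μ (v (j-1) β) x)) * w (k-j) α γ x))
        = ∑ j ∈ Finset.range k, (-1:ℝ)^j *
            (-(∑ μ, pd p (pd q (K μ)) x * pd μ (v j β) x) * w (k-1-j) α γ x) := by
      rw [Finset.sum_range_succ']
      have h0 : (-1:ℝ)^0 * ((∑ μ, pd p (pd q (K μ)) x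
          * (if 0 = 0 then 0 else pd μ (v (0-1) β) x)) * w (k-0) α γ x) = 0 := by simp
      rw [h0, add_zero]
      refine Finset.sum_congr rfl fun j hj => ?_
      simp only [Nat.succ_ne_zero, if_false, Nat.add_sub_cancel,
        show k - (j+1) = k - 1 - j from by omega, pow_succ]
      ring
    have eB : (∑ j ∈ Finset.range (k+1), (-1:ℝ)^j *
          (pd q (v j β) x * (∑ ρ, pd p (pd ρ (K α)) x
              * (if k - j = 0 then 0 else w (k-j-1) ρ γ x))
           + pd p (v j β) x * (∑ ρ, pd q (pd ρ (K α)) x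
              * (if k - j = 0 then 0 else w (k-j-1) ρ γ x))
           + v j β x * (∑ ρ, pd p (pd q (pd ρ (K α))) x
              * (if k - j = 0 then 0 else w (k-j-1) ρ γ x))))
        = ∑ j ∈ Finset.range k, (-1:ℝ)^j *
            (pd q (v j β) x * (∑ ρ, pd p (pd ρ (K α)) x * w (k-1-j) ρ γ x)
             + pd p (v j β) x * (∑ ρ, pd q (pd ρ (K α)) x * w (k-1-j) ρ γ x)
             + v j β x * (∑ ρ, pd p (pd q (pd ρ (K α))) x * w (k-1-j) ρ γ x)) := by
      rw [Finset.sum_range_succ]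
      have h0 : (-1:ℝ)^k *
          (pd q (v k β) x * (∑ ρ, pd p (pd ρ (K α)) x
              * (if k - k = 0 then 0 else w (k-k-1) ρ γ x))
           + pd p (v k β) x * (∑ ρ, pd q (pd ρ (K α)) x
              * (if k - k = 0 then 0 else w (k-k-1) ρ γ x))
           + v k β x * (∑ ρ, pd p (pd q (pd ρ (K α))) x
              * (if k - k = 0 then 0 else w (k-k-1) ρ γ x))) = 0 := by
        simp [Nat.sub_self]
      rw [h0, add_zero]
      refine Finset.sum_congr rfl fun j hj => ?_
      have h1 : ¬(k - j = 0) := by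
        have := Finset.mem_range.mp hj; omega
      simp only [h1, if_false, show k - j - 1 = k - 1 - j from by omega]
    have eC : (∑ j ∈ Finset.range (k+1), (-1:ℝ)^j * (v j β x * (∑ ρ, pd q (pd ρ (K α)) x
          * (∑ σ, pd p (pd σ (K ρ)) x
              * (if k - j - 1 = 0 then 0 else w (k-j-1-1) σ γ x)))))
        = ∑ j ∈ Finset.range k, (-1:ℝ)^j *
            (-((if j = 0 then 0 else v (j-1) β x)
               * (∑ ρ, pd q (pd ρ (K α)) x
                   * (∑ σ, pd p (pd σ (K ρ)) x * w (k-1-j) σ γ x)))) := by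
      have hvan : ∀ j, k ≤ j + 1 → (-1:ℝ)^j * (v j β x * (∑ ρ, pd q (pd ρ (K α)) x
          * (∑ σ, pd p (pd σ (K ρ)) x
              * (if k - j - 1 = 0 then 0 else w (k-j-1-1) σ γ x)))) = 0 := by
        intro j hj
        have h2 : k - j - 1 = 0 := by omega
        rw [h2]
        simp
      rw [sum_shift (fun j => (-1:ℝ)^j * (v j β x * (∑ ρ, pd q (pd ρ (K α)) x
          * (∑ σ, pd p (pd σ (K ρ)) x
              * (if k - j - 1 = 0 then 0 else w (k-j-1-1) σ γ x))))) k hvan]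
      refine Finset.sum_congr rfl fun j hj => ?_
      by_cases h0 : j = 0
      · simp [h0]
      · obtain ⟨jj, rfl⟩ : ∃ jj, j = jj + 1 := ⟨j - 1, by omega⟩
        have h1 : ¬(k - jj - 1 = 0) := by
          have := Finset.mem_range.mp hj; omega
        simp only [if_neg h0, Nat.add_sub_cancel, h1, if_false,
          show k - jj - 1 - 1 = k - 1 - (jj+1) from by omega, pow_succ]
        ring
    rw [eA, eB, eC, ← Finset.sum_add_distrib, ← Finset.sum_add_distrib]
    refine Finset.sum_congr rfl fun j hj => ?_
    simp only [hRdef]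
    ring
  -- symmetry facts at x
  have hA : ∀ (X p q : Fin n), pd p (pd q (K X)) x = pd q (pd p (K X)) x :=
    fun X p q => pd_comm (hK X) p q x
  have hAEx : ∀ (X p q r : Fin n),
      (∑ ρ, pd p (pd ρ (K X)) x * pd q (pd r (K ρ)) x)
        = ∑ ρ, pd p (pd q (K ρ)) x * pd ρ (pd r (K X)) x :=
    fun X p q r => hAE p q r X x
  have hBc : ∀ (X p q r : Fin n),
      pd p (pd q (pd r (K X))) x = pd q (pd r (pd p (K X))) x := by
    intro X p q r
    have h1 : pd p (pd q (pd r (K X))) x = pd q (pd p (pd r (K X))) x :=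
      pd_comm (contDiff_pd r (hK X)) p q x
    have h2 : pd p (pd r (K X)) = pd r (pd p (K X)) := funext fun y => pd_comm (hK X) p r y
    rw [h1, h2]
  have hdAEx : ∀ (s X p q r : Fin n),
      (∑ ρ, (pd s (pd p (pd ρ (K X))) x * pd q (pd r (K ρ)) x
          + pd p (pd ρ (K X)) x * pd s (pd q (pd r (K ρ))) x))
        = ∑ ρ, (pd s (pd p (pd q (K ρ))) x * pd ρ (pd r (K X)) x
          + pd p (pd q (K ρ)) x * pd s (pd ρ (pd r (K X))) x) := by
    intro s X p q r
    have hfun : (fun y => ∑ ρ, pd p (pd ρ (K X)) y * pd q (pd r (K ρ)) y)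
        = (fun y => ∑ ρ, pd p (pd q (K ρ)) y * pd ρ (pd r (K X)) y) :=
      funext fun y => hAE p q r X y
    have e1 : pd s (fun y => ∑ ρ, pd p (pd ρ (K X)) y * pd q (pd r (K ρ)) y) x
        = ∑ ρ, (pd s (pd p (pd ρ (K X))) x * pd q (pd r (K ρ)) x
            + pd p (pd ρ (K X)) x * pd s (pd q (pd r (K ρ))) x) := by
      rw [pd_sum Finset.univ s (fun ρ => fun y => pd p (pd ρ (K X)) y * pd q (pd r (K ρ)) y)
        (fun ρ _ => dat ((hKc2 X p ρ).mul (hKc2 ρ q r)) x)]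
      exact Finset.sum_congr rfl fun ρ _ => pd_mul s (dat (hKc2 X p ρ) x) (dat (hKc2 ρ q r) x)
    have e2 : pd s (fun y => ∑ ρ, pd p (pd q (K ρ)) y * pd ρ (pd r (K X)) y) x
        = ∑ ρ, (pd s (pd p (pd q (K ρ))) x * pd ρ (pd r (K X)) x
            + pd p (pd q (K ρ)) x * pd s (pd ρ (pd r (K X))) x) := by
      rw [pd_sum Finset.univ s (fun ρ => fun y => pd p (pd q (K ρ)) y * pd ρ (pd r (K X)) y)
        (fun ρ _ => dat ((hKc2 ρ p q).mul (hKc2 X ρ r)) x)]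
      exact Finset.sum_congr rfl fun ρ _ => pd_mul s (dat (hKc2 ρ p q) x) (dat (hKc2 X ρ r) x)
    have e0 : pd s (fun y => ∑ ρ, pd p (pd ρ (K X)) y * pd q (pd r (K ρ)) y) x
        = pd s (fun y => ∑ ρ, pd p (pd q (K ρ)) y * pd ρ (pd r (K X)) y) x := by rw [hfun]
    rw [e1, e2] at e0
    exact e0
  -- rewrite the goal using hD
  have T1 : (∑ ρ, pd a (pd ρ (fun y => ∑ j ∈ Finset.range (k + 1),
        (-1 : ℝ) ^ j * v j β y * w (k - j) ν γ y)) x * pd b (pd c (K ρ)) x)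
      = ∑ j ∈ Finset.range k, (-1:ℝ)^j * (∑ ρ, R j ν a ρ * pd b (pd c (K ρ)) x) := by
    calc (∑ ρ, pd a (pd ρ (fun y => ∑ j ∈ Finset.range (k + 1),
          (-1 : ℝ) ^ j * v j β y * w (k - j) ν γ y)) x * pd b (pd c (K ρ)) x)
        = ∑ ρ, (∑ j ∈ Finset.range k, (-1:ℝ)^j * R j ν a ρ) * pd b (pd c (K ρ)) x :=
          Finset.sum_congr rfl fun ρ _ => by rw [hD ν a ρ]
      _ = ∑ j ∈ Finset.range k, ∑ ρ, ((-1:ℝ)^j * R j ν a ρ) * pd b (pd c (K ρ)) x := by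
          simp only [Finset.sum_mul]; exact Finset.sum_comm
      _ = _ := by
          refine Finset.sum_congr rfl fun j _ => ?_
          rw [Finset.mul_sum]
          exact Finset.sum_congr rfl fun ρ _ => by ring
  have T2 : (∑ ρ, pd a (pd ρ (K ν)) x * pd b (pd c (fun y => ∑ j ∈ Finset.range (k + 1),
        (-1 : ℝ) ^ j * v j β y * w (k - j) ρ γ y)) x)
      = ∑ j ∈ Finset.range k, (-1:ℝ)^j * (∑ ρ, pd a (pd ρ (K ν)) x * R j ρ b c) := by
    calc (∑ ρ, pd a (pd ρ (K ν)) x * pd b (pd c (fun y => ∑ j ∈ Finset.range (k + 1),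
          (-1 : ℝ) ^ j * v j β y * w (k - j) ρ γ y)) x)
        = ∑ ρ, pd a (pd ρ (K ν)) x * (∑ j ∈ Finset.range k, (-1:ℝ)^j * R j ρ b c) :=
          Finset.sum_congr rfl fun ρ _ => by rw [hD ρ b c]
      _ = ∑ j ∈ Finset.range k, ∑ ρ, pd a (pd ρ (K ν)) x * ((-1:ℝ)^j * R j ρ b c) := by
          simp only [Finset.mul_sum]; exact Finset.sum_comm
      _ = _ := by
          refine Finset.sum_congr rfl fun j _ => ?_
          rw [Finset.mul_sum]
          exact Finset.sum_congr rfl fun ρ _ => by ring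
  have T3 : (∑ ρ, pd a (pd b (fun y => ∑ j ∈ Finset.range (k + 1),
        (-1 : ℝ) ^ j * v j β y * w (k - j) ρ γ y)) x * pd ρ (pd c (K ν)) x)
      = ∑ j ∈ Finset.range k, (-1:ℝ)^j * (∑ ρ, R j ρ a b * pd ρ (pd c (K ν)) x) := by
    calc (∑ ρ, pd a (pd b (fun y => ∑ j ∈ Finset.range (k + 1),
          (-1 : ℝ) ^ j * v j β y * w (k - j) ρ γ y)) x * pd ρ (pd c (K ν)) x)
        = ∑ ρ, (∑ j ∈ Finset.range k, (-1:ℝ)^j * R j ρ a b) * pd ρ (pd c (K ν)) x :=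
          Finset.sum_congr rfl fun ρ _ => by rw [hD ρ a b]
      _ = ∑ j ∈ Finset.range k, ∑ ρ, ((-1:ℝ)^j * R j ρ a b) * pd ρ (pd c (K ν)) x := by
          simp only [Finset.sum_mul]; exact Finset.sum_comm
      _ = _ := by
          refine Finset.sum_congr rfl fun j _ => ?_
          rw [Finset.mul_sum]
          exact Finset.sum_congr rfl fun ρ _ => by ring
  have T4 : (∑ ρ, pd a (pd b (K ρ)) x * pd ρ (pd c (fun y => ∑ j ∈ Finset.range (k + 1),
        (-1 : ℝ) ^ j * v j β y * w (k - j) ν γ y)) x)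
      = ∑ j ∈ Finset.range k, (-1:ℝ)^j * (∑ ρ, pd a (pd b (K ρ)) x * R j ν ρ c) := by
    calc (∑ ρ, pd a (pd b (K ρ)) x * pd ρ (pd c (fun y => ∑ j ∈ Finset.range (k + 1),
          (-1 : ℝ) ^ j * v j β y * w (k - j) ν γ y)) x)
        = ∑ ρ, pd a (pd b (K ρ)) x * (∑ j ∈ Finset.range k, (-1:ℝ)^j * R j ν ρ c) :=
          Finset.sum_congr rfl fun ρ _ => by rw [hD ν ρ c]
      _ = ∑ j ∈ Finset.range k, ∑ ρ, pd a (pd b (K ρ)) x * ((-1:ℝ)^j * R j ν ρ c) := by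
          simp only [Finset.mul_sum]; exact Finset.sum_comm
      _ = _ := by
          refine Finset.sum_congr rfl fun j _ => ?_
          rw [Finset.mul_sum]
          exact Finset.sum_congr rfl fun ρ _ => by ring
  rw [T1, T2, T3, T4, ← Finset.sum_add_distrib, ← Finset.sum_add_distrib]
  refine Finset.sum_congr rfl fun j hj => ?_
  have key := key_alg (fun X p q => pd p (pd q (K X)) x)
    (fun X p q r => pd p (pd q (pd r (K X))) x)
    (fun ρ => w (k-1-j) ρ γ x) (fun μ => pd μ (v j β) x)
    (v j β x) (if j = 0 then 0 else v (j-1) β x)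
    hA hAEx hBc hdAEx (R j) (fun X p q => by simp only [hRdef]) a b c ν
  beta_reduce at key
  linear_combination ((-1:ℝ)^j) * key
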